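/- Let d ≥ 1, let x₁, …, x_k, y₁, …, y_k ∈ ℝ^d, let π be a permutation of {1, …, k}, and let δ > 0. Define f_δ : ℝ^d → ℝ^d by f_δ(x) = (1/k) Σ_{j=1}^k (x_j − y_{π(j)}) ∫_0^1 G_δ(x − y_{π(j)} − t (x_j − y_{π(j)})) dt. Then ‖f_δ‖_{L²(ℝ^d)} ≤ ( 2^{(1−d)/2} δ^{1−d} · (1/k) Σ_{j=1}^k |x_j − y_{π(j)}| )^{1/2}. -/

import Mathlib

open MeasureTheory Real


variable {d : ℕ}

noncomputable def Gd (δ : ℝ) (w : EuclideanSpace ℝ (Fin d)) : ℝ :=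
  δ ^ (-(d : ℤ)) * rexp (-(π * ‖w‖ ^ 2 / δ ^ 2))

lemma Gd_nonneg {δ : ℝ} (hδ : 0 < δ) (w : EuclideanSpace ℝ (Fin d)) : 0 ≤ Gd δ w := by
  unfold Gd; positivity

lemma gauss_int {b : ℝ} (hb : 0 < b) :
    ∫ v : EuclideanSpace ℝ (Fin d), rexp (-b * ‖v‖^2) = (π / b) ^ ((d:ℝ) / 2) := by
  rw [GaussianFourier.integral_rexp_neg_mul_sq_norm hb]
  simp [finrank_euclideanSpace_fin]

lemma gauss_integrable {b : ℝ} (hb : 0 < b) :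
    Integrable (fun v : EuclideanSpace ℝ (Fin d) => rexp (-b * ‖v‖^2)) := by
  have h := (GaussianFourier.integrable_cexp_neg_mul_sq_norm_add (V := EuclideanSpace ℝ (Fin d))
    (b := (b:ℂ)) (by simpa using hb) 0 0).re
  refine h.congr (Filter.Eventually.of_forall fun v => ?_)
  push_cast
  simp [Complex.exp_ofReal_re, ← Complex.ofReal_pow, ← Complex.ofReal_mul, ← Complex.ofReal_neg]

lemma gauss_prod_eq {δ : ℝ} (hδ : 0 < δ) (p q : EuclideanSpace ℝ (Fin d)) :
    (fun z => Gd δ (z - p) * Gd δ (z - q)) =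
      fun z => (δ ^ (-(d:ℤ)) * δ ^ (-(d:ℤ)) * rexp (-(π * ‖p - q‖^2 / (2 * δ^2)))) *
        rexp (-(2 * π / δ^2) * ‖z - (2⁻¹:ℝ)•(p+q)‖^2) := by
  funext z
  have key : ‖z - p‖^2 + ‖z - q‖^2 = 2*‖z - (2⁻¹:ℝ)•(p+q)‖^2 + ‖p - q‖^2/2 := by
    have h := parallelogram_law_with_norm ℝ (z - p) (z - q)
    have e1 : (z - p) + (z - q) = (2:ℝ) • (z - (2⁻¹:ℝ)•(p+q)) := by
      rw [smul_sub, smul_smul]; norm_num; module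
    have e2 : (z - p) - (z - q) = q - p := by abel
    rw [e1, e2, norm_smul] at h
    rw [norm_sub_rev q p] at h
    simp only [Real.norm_ofNat, mul_pow] at h
    nlinarith [h]
  have hexp : -(π * ‖z - p‖^2/δ^2) + -(π * ‖z - q‖^2/δ^2)
      = -(π * ‖p - q‖^2/(2*δ^2)) + -(2*π/δ^2) * ‖z - (2⁻¹:ℝ)•(p+q)‖^2 := by
    have hδ2 : δ^2 ≠ 0 := by positivity
    linear_combination (-(π/δ^2)) * key
  unfold Gd
  calc δ ^ (-(d:ℤ)) * rexp (-(π * ‖z - p‖^2/δ^2)) * (δ ^ (-(d:ℤ)) * rexp (-(π * ‖z - q‖^2/δ^2)))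
      = δ ^ (-(d:ℤ)) * δ ^ (-(d:ℤ)) * rexp (-(π * ‖z - p‖^2/δ^2) + -(π * ‖z - q‖^2/δ^2)) := by
        rw [Real.exp_add]; ring
    _ = δ ^ (-(d:ℤ)) * δ ^ (-(d:ℤ)) * rexp (-(π * ‖p - q‖^2/(2*δ^2)) + -(2*π/δ^2) * ‖z - (2⁻¹:ℝ)•(p+q)‖^2) := by
        rw [hexp]
    _ = _ := by rw [Real.exp_add]; ring

lemma gauss_prod_integral {δ : ℝ} (hδ : 0 < δ) (p q : EuclideanSpace ℝ (Fin d)) :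
    Integrable (fun z : EuclideanSpace ℝ (Fin d) => Gd δ (z - p) * Gd δ (z - q)) ∧
    ∫ z : EuclideanSpace ℝ (Fin d), Gd δ (z - p) * Gd δ (z - q) =
      (Real.sqrt 2 * δ) ^ (-(d:ℤ)) * rexp (-(π * ‖p - q‖^2 / (2 * δ^2))) := by
  have hb : (0:ℝ) < 2 * π / δ^2 := by positivity
  have hs2 : (0:ℝ) < Real.sqrt 2 := by positivity
  set m := (2⁻¹:ℝ)•(p+q) with hm
  rw [gauss_prod_eq hδ p q]
  have hint : Integrable (fun z : EuclideanSpace ℝ (Fin d) =>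
      rexp (-(2 * π / δ^2) * ‖z - m‖^2)) :=
    (gauss_integrable hb).comp_sub_right m
  constructor
  · exact hint.const_mul _
  · rw [integral_const_mul]
    rw [show (fun z : EuclideanSpace ℝ (Fin d) => rexp (-(2 * π / δ^2) * ‖z - m‖^2))
        = fun z => (fun w => rexp (-(2 * π / δ^2) * ‖w‖^2)) (z - m) from rfl]
    rw [integral_sub_right_eq_self (fun w : EuclideanSpace ℝ (Fin d) =>
      rexp (-(2 * π / δ^2) * ‖w‖^2)) m, gauss_int hb]
    have hval : (π / (2 * π / δ ^ 2)) ^ ((d:ℝ) / 2) = (δ / Real.sqrt 2) ^ (d:ℕ) := by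
      have h1 : π / (2 * π / δ ^ 2) = (δ / Real.sqrt 2)^2 := by
        rw [div_pow, Real.sq_sqrt (by norm_num : (0:ℝ) ≤ 2)]
        have : π ≠ 0 := Real.pi_ne_zero
        field_simp
      rw [h1, ← Real.rpow_natCast (δ / Real.sqrt 2) d, ← Real.rpow_two,
        ← Real.rpow_mul (by positivity)]
      congr 1
      ring
    rw [hval]
    have base : δ⁻¹ * δ⁻¹ * (δ / Real.sqrt 2) = (Real.sqrt 2 * δ)⁻¹ := by
      field_simp
    calc δ ^ (-(d:ℤ)) * δ ^ (-(d:ℤ)) * rexp (-(π * ‖p - q‖^2/(2*δ^2))) * (δ / Real.sqrt 2) ^ (d:ℕ)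
        = (δ⁻¹ * δ⁻¹ * (δ / Real.sqrt 2))^(d:ℕ) * rexp (-(π * ‖p - q‖^2/(2*δ^2))) := by
          simp only [zpow_neg, zpow_natCast, ← inv_pow, ← mul_pow]; ring
      _ = (Real.sqrt 2 * δ) ^ (-(d:ℤ)) * rexp (-(π * ‖p - q‖^2/(2*δ^2))) := by
          rw [base, zpow_neg, zpow_natCast, inv_pow]

lemma line_bound {b s : ℝ} (hb : 0 < b) :
    ∫ t in Set.Ioc (0:ℝ) 1, rexp (-b * (t - s)^2) ≤ Real.sqrt (π / b) := by
  have hint : Integrable (fun t : ℝ => rexp (-b * (t - s)^2)) :=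
    (integrable_exp_neg_mul_sq hb).comp_sub_right s
  calc ∫ t in Set.Ioc (0:ℝ) 1, rexp (-b * (t - s)^2)
      ≤ ∫ t : ℝ, rexp (-b * (t - s)^2) :=
        setIntegral_le_integral hint (Filter.Eventually.of_forall fun t => by positivity)
    _ = Real.sqrt (π / b) := by
        rw [show (fun t : ℝ => rexp (-b*(t-s)^2)) = fun t => (fun u => rexp (-b*u^2)) (t - s)
          from rfl, integral_sub_right_eq_self (fun u : ℝ => rexp (-b*u^2)) s,
          integral_gaussian]

noncomputable def cfun (δ : ℝ) (a v z : EuclideanSpace ℝ (Fin d)) : ℝ :=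
  ∫ t in (0:ℝ)..1, Gd δ (z - a - t • v)

lemma cfun_key {δ : ℝ} (hδ : 0 < δ) (a v : EuclideanSpace ℝ (Fin d)) :
    Integrable (fun z => (cfun δ a v z)^2) ∧
    ‖v‖^2 * ∫ z, (cfun δ a v z)^2
      ≤ (Real.sqrt 2 * δ) ^ (-(d:ℤ)) * (Real.sqrt 2 * δ) * ‖v‖ := by
  set μ := volume.restrict (Set.Ioc (0:ℝ) 1) with hμ
  haveI : IsFiniteMeasure μ := ⟨by simp [hμ, Real.volume_Ioc]⟩
  set p : ℝ → EuclideanSpace ℝ (Fin d) := fun t => a + t • v with hp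
  have hGdc : Continuous (Gd (d := d) δ) := by
    unfold Gd; fun_prop
  set F : EuclideanSpace ℝ (Fin d) × (ℝ × ℝ) → ℝ :=
    fun w => Gd δ (w.1 - p w.2.1) * Gd δ (w.1 - p w.2.2) with hF
  have hFcont : Continuous F := by
    apply Continuous.mul <;> exact hGdc.comp (by fun_prop)
  have hFnn : ∀ w, 0 ≤ F w := fun w =>
    mul_nonneg (Gd_nonneg hδ _) (Gd_nonneg hδ _)
  set A : ℝ := (Real.sqrt 2 * δ) ^ (-(d:ℤ)) with hA
  have hApos : 0 < A := by
    have : (0:ℝ) < Real.sqrt 2 * δ := by positivity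
    positivity
  -- pointwise squared value
  have hsq : ∀ z, (cfun δ a v z)^2 = ∫ w, F (z, w) ∂(μ.prod μ) := by
    intro z
    have h1 : cfun δ a v z = ∫ t, Gd δ (z - p t) ∂μ := by
      rw [cfun, intervalIntegral.integral_of_le zero_le_one]
      simp only [sub_sub, hp]
      rfl
    rw [h1, sq, ← integral_prod_mul (μ := μ) (ν := μ)
      (f := fun t => Gd δ (z - p t)) (g := fun t => Gd δ (z - p t))]
  -- integrability of F on the product
  have hFint : Integrable F (volume.prod (μ.prod μ)) := by
    refine ⟨hFcont.aestronglyMeasurable, ?_⟩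
    rw [hasFiniteIntegral_iff_norm]
    have hswap : ∫⁻ w, ENNReal.ofReal ‖F w‖ ∂(volume.prod (μ.prod μ))
        = ∫⁻ ts, ∫⁻ z, ENNReal.ofReal ‖F (z, ts)‖ ∂volume ∂(μ.prod μ) :=
      lintegral_prod_symm _ (hFcont.norm.measurable.ennreal_ofReal).aemeasurable
    rw [hswap]
    have hinner : ∀ ts : ℝ × ℝ, ∫⁻ z, ENNReal.ofReal ‖F (z, ts)‖ ∂volume
        ≤ ENNReal.ofReal A := by
      intro ts
      have hi := (gauss_prod_integral hδ (p ts.1) (p ts.2)).1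
      have hv := (gauss_prod_integral hδ (p ts.1) (p ts.2)).2
      have : ∫⁻ z, ENNReal.ofReal ‖F (z, ts)‖ ∂volume
          = ENNReal.ofReal (∫ z, Gd δ (z - p ts.1) * Gd δ (z - p ts.2)) := by
        rw [ofReal_integral_eq_lintegral_ofReal hi
          (Filter.Eventually.of_forall fun z => hFnn (z, ts))]
        congr 1; funext z
        rw [Real.norm_of_nonneg (hFnn (z, ts))]
      rw [this, hv]
      apply ENNReal.ofReal_le_ofReal
      rw [hA]
      have hle : rexp (-(π * ‖p ts.1 - p ts.2‖^2 / (2*δ^2))) ≤ 1 := by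
        rw [← Real.exp_zero]
        exact Real.exp_le_exp.mpr (neg_nonpos.mpr (by positivity))
      nlinarith [Real.exp_pos (-(π * ‖p ts.1 - p ts.2‖^2 / (2*δ^2))), hApos]
    calc ∫⁻ ts, ∫⁻ z, ENNReal.ofReal ‖F (z, ts)‖ ∂volume ∂(μ.prod μ)
        ≤ ∫⁻ _ts, ENNReal.ofReal A ∂(μ.prod μ) := lintegral_mono hinner
      _ = ENNReal.ofReal A * (μ.prod μ) Set.univ := by rw [lintegral_const]
      _ < ⊤ := by
          apply ENNReal.mul_lt_top ENNReal.ofReal_lt_top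
          rw [← Set.univ_prod_univ, Measure.prod_prod]
          simp [hμ, Real.volume_Ioc]
  -- C1
  have hC1 : Integrable (fun z => (cfun δ a v z)^2) := by
    have := hFint.integral_prod_left
    exact this.congr (Filter.Eventually.of_forall fun z => (hsq z).symm)
  refine ⟨hC1, ?_⟩
  rcases eq_or_ne v 0 with hv | hv
  · simp [hv]
  have hvn : (0:ℝ) < ‖v‖ := norm_pos_iff.mpr hv
  set bb := π * ‖v‖^2 / (2*δ^2) with hbb
  have hbbpos : 0 < bb := by rw [hbb]; positivity
  have hval : ∀ ts : ℝ × ℝ, ∫ z, F (z, ts) ∂volume = A * rexp (-bb * (ts.1 - ts.2)^2) := by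
    intro ts
    have hv2 := (gauss_prod_integral hδ (p ts.1) (p ts.2)).2
    have hpp : p ts.1 - p ts.2 = (ts.1 - ts.2) • v := by
      simp only [hp]; module
    simp only [hF]
    rw [hv2, hpp, norm_smul, Real.norm_eq_abs, hA]
    congr 2
    rw [mul_pow, sq_abs, hbb]
    ring
  have hswap2 : ∫ z, (cfun δ a v z)^2
      = ∫ ts, A * rexp (-bb*(ts.1-ts.2)^2) ∂(μ.prod μ) := by
    calc ∫ z, (cfun δ a v z)^2 = ∫ z, ∫ w, F (z,w) ∂(μ.prod μ) :=
          integral_congr_ae (Filter.Eventually.of_forall hsq)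
      _ = ∫ w, ∫ z, F (z,w) ∂volume ∂(μ.prod μ) := integral_integral_swap hFint
      _ = _ := integral_congr_ae (Filter.Eventually.of_forall hval)
  have he_int : Integrable (fun ts : ℝ×ℝ => rexp (-bb*(ts.1-ts.2)^2)) (μ.prod μ) := by
    refine Integrable.mono' (integrable_const 1)
      (Continuous.aestronglyMeasurable (by fun_prop))
      (Filter.Eventually.of_forall fun ts => ?_)
    rw [Real.norm_of_nonneg (Real.exp_pos _).le, ← Real.exp_zero]
    exact Real.exp_le_exp.mpr (by nlinarith [sq_nonneg (ts.1-ts.2), hbbpos.le])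
  have hbound : ∫ ts, rexp (-bb*(ts.1-ts.2)^2) ∂(μ.prod μ) ≤ Real.sqrt (π / bb) := by
    rw [integral_prod _ he_int]
    have hs : ∀ t : ℝ, ∫ s, rexp (-bb*(t-s)^2) ∂μ ≤ Real.sqrt (π/bb) := by
      intro t
      have h1 : ∀ s:ℝ, rexp (-bb*(t-s)^2) = rexp (-bb*(s-t)^2) := by
        intro s; congr 1; ring
      simp_rw [h1]
      exact line_bound hbbpos
    calc ∫ t, (∫ s, rexp (-bb*(t-s)^2) ∂μ) ∂μ ≤ ∫ _t, Real.sqrt (π/bb) ∂μ := by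
          apply integral_mono_of_nonneg
          · exact Filter.Eventually.of_forall fun t =>
              integral_nonneg fun s => (Real.exp_pos _).le
          · exact integrable_const _
          · exact Filter.Eventually.of_forall hs
      _ = Real.sqrt (π/bb) := by
          rw [integral_const]
          simp [hμ, Real.volume_Ioc]
  have hsqrt : Real.sqrt (π/bb) = Real.sqrt 2 * δ / ‖v‖ := by
    have h1 : π / bb = (Real.sqrt 2 * δ / ‖v‖)^2 := by
      rw [hbb, div_pow, mul_pow, Real.sq_sqrt (by norm_num : (0:ℝ) ≤ 2)]
      have : π ≠ 0 := Real.pi_ne_zero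
      field_simp
    rw [h1, Real.sqrt_sq (by positivity)]
  calc ‖v‖^2 * ∫ z, (cfun δ a v z)^2
      = ‖v‖^2 * (A * ∫ ts, rexp (-bb*(ts.1-ts.2)^2) ∂(μ.prod μ)) := by
        rw [hswap2, integral_const_mul]
    _ ≤ ‖v‖^2 * (A * (Real.sqrt 2 * δ / ‖v‖)) := by
        rw [← hsqrt]
        gcongr
    _ = A * (Real.sqrt 2 * δ) * ‖v‖ := by
        field_simp

/-- **L² bound for the mollified transport flux between two empirical measures
(second appendix lemma, sums-of-deltas case).** For the straight-line flux matching
y_{σ(j)} to x_j, ‖f_δ‖_{L²} ≤ (2^{(1−d)/2} δ^{1−d} · (1/k) Σ_j |x_j − y_{σ(j)}|)^{1/2}. -/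
theorem empirical_flux_L2_bound
    (d : ℕ) (hd : 1 ≤ d) (k : ℕ) (hk : 0 < k)
    (x y : Fin k → EuclideanSpace ℝ (Fin d)) (σ : Equiv.Perm (Fin k))
    (δ : ℝ) (hδ : 0 < δ)
    (fδ : EuclideanSpace ℝ (Fin d) → EuclideanSpace ℝ (Fin d))
    (hfδ : ∀ z, fδ z = (1 / (k : ℝ)) •
      ∑ j : Fin k,
        (∫ t in (0 : ℝ)..1,
          (δ ^ (-(d : ℤ)) *
            Real.exp (-(Real.pi * ‖z - y (σ j) - t • (x j - y (σ j))‖ ^ 2 / δ ^ 2)))) •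
          (x j - y (σ j))) :
    Real.sqrt (∫ z : EuclideanSpace ℝ (Fin d), ‖fδ z‖ ^ 2)
      ≤ ((2 : ℝ) ^ (((1 : ℝ) - d) / 2) * δ ^ ((1 : ℝ) - d) *
          ((1 / (k : ℝ)) * ∑ j : Fin k, ‖x j - y (σ j)‖)) ^ ((1 : ℝ) / 2) := by
  have hk' : (k:ℝ) ≠ 0 := Nat.cast_ne_zero.mpr hk.ne'
  have hkpos : (0:ℝ) < k := Nat.cast_pos.mpr hk
  set c : Fin k → EuclideanSpace ℝ (Fin d) → ℝ :=
    fun j z => cfun δ (y (σ j)) (x j - y (σ j)) z with hc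
  have hfδ' : ∀ z, fδ z = (1 / (k : ℝ)) • ∑ j : Fin k, (c j z) • (x j - y (σ j)) :=
    fun z => hfδ z
  have hcnn : ∀ j z, 0 ≤ c j z := fun j z =>
    intervalIntegral.integral_nonneg zero_le_one (fun t _ => Gd_nonneg hδ _)
  -- pointwise bound
  have h1 : ∀ z, ‖fδ z‖^2 ≤ (1/(k:ℝ)) * ∑ j, ‖x j - y (σ j)‖^2 * (c j z)^2 := by
    intro z
    have hn : ‖fδ z‖ ≤ (1/(k:ℝ)) * ∑ j, c j z * ‖x j - y (σ j)‖ := by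
      rw [hfδ' z, norm_smul]
      calc ‖(1/(k:ℝ))‖ * ‖∑ j, (c j z) • (x j - y (σ j))‖
          ≤ (1/(k:ℝ)) * ∑ j, ‖(c j z) • (x j - y (σ j))‖ := by
            rw [Real.norm_of_nonneg (by positivity)]
            exact mul_le_mul_of_nonneg_left (norm_sum_le _ _) (by positivity)
        _ = (1/(k:ℝ)) * ∑ j, c j z * ‖x j - y (σ j)‖ := by
            congr 1
            exact Finset.sum_congr rfl fun j _ => by
              rw [norm_smul, Real.norm_of_nonneg (hcnn j z)]
    have hcs := sq_sum_le_card_mul_sum_sq (s := Finset.univ)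
      (f := fun j => c j z * ‖x j - y (σ j)‖)
    simp only [Finset.card_univ, Fintype.card_fin] at hcs
    have hSS : ∑ j, (c j z * ‖x j - y (σ j)‖)^2
        = ∑ j, ‖x j - y (σ j)‖^2 * (c j z)^2 :=
      Finset.sum_congr rfl fun j _ => by ring
    calc ‖fδ z‖^2 ≤ ((1/(k:ℝ)) * ∑ j, c j z * ‖x j - y (σ j)‖)^2 := by
          apply pow_le_pow_left₀ (norm_nonneg _) hn
      _ = (1/(k:ℝ))^2 * (∑ j, c j z * ‖x j - y (σ j)‖)^2 := by ring
      _ ≤ (1/(k:ℝ))^2 * ((k:ℝ) * ∑ j, (c j z * ‖x j - y (σ j)‖)^2) := by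
          exact mul_le_mul_of_nonneg_left hcs (by positivity)
      _ = (1/(k:ℝ)) * ∑ j, ‖x j - y (σ j)‖^2 * (c j z)^2 := by
          rw [hSS]; field_simp
  have hintj : ∀ j : Fin k, Integrable (fun z => (c j z)^2) :=
    fun j => (cfun_key hδ (y (σ j)) (x j - y (σ j))).1
  have hmaj : Integrable (fun z : EuclideanSpace ℝ (Fin d) =>
      (1/(k:ℝ)) * ∑ j, ‖x j - y (σ j)‖^2 * (c j z)^2) := by
    apply Integrable.const_mul
    exact integrable_finset_sum _ fun j _ => (hintj j).const_mul _
  set C : ℝ := (Real.sqrt 2 * δ) ^ (-(d:ℤ)) * (Real.sqrt 2 * δ) with hCdef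
  have hCpos : 0 < C := by
    have h2δ : (0:ℝ) < Real.sqrt 2 * δ := by positivity
    rw [hCdef]; positivity
  have h2 : ∫ z, ‖fδ z‖^2 ≤ C * ((1/(k:ℝ)) * ∑ j, ‖x j - y (σ j)‖) := by
    calc ∫ z, ‖fδ z‖^2
        ≤ ∫ z, (1/(k:ℝ)) * ∑ j, ‖x j - y (σ j)‖^2 * (c j z)^2 :=
          integral_mono_of_nonneg (Filter.Eventually.of_forall fun z => by positivity)
            hmaj (Filter.Eventually.of_forall h1)
      _ = (1/(k:ℝ)) * ∑ j, ‖x j - y (σ j)‖^2 * ∫ z, (c j z)^2 := by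
          rw [integral_const_mul, integral_finset_sum _ fun j _ => (hintj j).const_mul _]
          congr 1
          exact Finset.sum_congr rfl fun j _ => integral_const_mul _ _
      _ ≤ (1/(k:ℝ)) * ∑ j, C * ‖x j - y (σ j)‖ := by
          apply mul_le_mul_of_nonneg_left _ (by positivity)
          apply Finset.sum_le_sum
          intro j _
          exact (cfun_key hδ (y (σ j)) (x j - y (σ j))).2
      _ = C * ((1/(k:ℝ)) * ∑ j, ‖x j - y (σ j)‖) := by
          rw [← Finset.mul_sum]; ring
  have hCval : C = (2:ℝ) ^ (((1:ℝ) - d) / 2) * δ ^ ((1:ℝ) - d) := by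
    have h2δ : (0:ℝ) < Real.sqrt 2 * δ := by positivity
    have hz : C = (Real.sqrt 2 * δ) ^ ((1:ℤ) - d) := by
      rw [hCdef, zpow_sub₀ h2δ.ne', zpow_one, zpow_natCast, ← zpow_natCast (Real.sqrt 2 * δ) d]
      field_simp
      rw [zpow_neg, inv_mul_cancel₀ (zpow_pos h2δ _).ne']
    rw [hz, ← Real.rpow_intCast (Real.sqrt 2 * δ) ((1:ℤ) - d)]
    push_cast
    rw [Real.mul_rpow (Real.sqrt_nonneg 2) hδ.le, Real.sqrt_eq_rpow,
      ← Real.rpow_mul (by norm_num : (0:ℝ) ≤ 2)]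
    congr 1
    ring
  have hS : 0 ≤ (1/(k:ℝ)) * ∑ j, ‖x j - y (σ j)‖ := by positivity
  calc Real.sqrt (∫ z, ‖fδ z‖^2)
      ≤ Real.sqrt (C * ((1/(k:ℝ)) * ∑ j, ‖x j - y (σ j)‖)) := Real.sqrt_le_sqrt h2
    _ = ((2:ℝ) ^ (((1:ℝ) - d) / 2) * δ ^ ((1:ℝ) - d) *
          ((1/(k:ℝ)) * ∑ j, ‖x j - y (σ j)‖)) ^ ((1:ℝ)/2) := by
        rw [hCval, Real.sqrt_eq_rpow]
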